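/- arXiv:2502.17065 — 2 statements merged into one kernel-verified Lean document; each statement's English description precedes it below -/
import Mathlib

section
/- The zip-shift map σ_τ is an open map on the full zip-shift space Σ_{Z,S}. -/
/-- The full zip-shift space `Σ_{Z,S}`: bi-infinite sequences with entries in `Z`
at negative indices and in `S` at nonnegative indices.  The first component records
the negative coordinates via `x_{-1-n} = x.1 n`, the second the nonnegative ones. -/
abbrev Zip (Z S : Type*) : Type _ := (ℕ → Z) × (ℕ → S)

/-- The coordinate of a point of the zip-shift space at index `i ∈ ℤ`. -/
def zcoord {Z S : Type*} (x : Zip Z S) (i : ℤ) : Z ⊕ S :=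
  if i < 0 then Sum.inl (x.1 (-1 - i).toNat) else Sum.inr (x.2 i.toNat)

/-- The zip-shift map `σ_τ`: `(σ_τ x)_i = x_{i+1}` for `i ≠ -1`, and
`(σ_τ x)_{-1} = τ (x_0)`. -/
def zipShift {Z S : Type*} (τ : S → Z) (x : Zip Z S) : Zip Z S :=
  (fun n => if n = 0 then τ (x.2 0) else x.1 (n - 1), fun n => x.2 (n + 1))

open Classical in
/-- The metric `d̄(x,y) = 2^{-D(x,y)}`, where `D(x,y) = min {|i| : x_i ≠ y_i}`. -/
noncomputable def zipDist {Z S : Type*} (x y : Zip Z S) : ℝ :=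
  if x = y then 0
  else (1 / 2 : ℝ) ^ sInf {n : ℕ | ∃ i : ℤ, i.natAbs = n ∧ zcoord x i ≠ zcoord y i}


/-- Section of the zip-shift keyed by the choice `s₀` of the coordinate at index `0`. -/
def zipUnshift {Z S : Type*} (s₀ : S) (y : Zip Z S) : Zip Z S :=
  (fun n => y.1 (n + 1), fun n => if n = 0 then s₀ else y.2 (n - 1))

lemma zipUnshift_zipShift {Z S : Type*} (τ : S → Z) (x : Zip Z S) :
    zipUnshift (x.2 0) (zipShift τ x) = x := by
  unfold zipUnshift zipShift
  refine Prod.ext (funext fun n => ?_) (funext fun n => ?_)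
  · simp
  · rcases n with _ | n <;> simp

lemma zipShift_zipUnshift {Z S : Type*} (τ : S → Z) (s₀ : S) (y : Zip Z S)
    (h : y.1 0 = τ s₀) : zipShift τ (zipUnshift s₀ y) = y := by
  unfold zipUnshift zipShift
  refine Prod.ext (funext fun n => ?_) (funext fun n => ?_)
  · rcases n with _ | n <;> simp [h]
  · simp

lemma continuous_zipUnshift {Z S : Type*}
    [TopologicalSpace Z] [TopologicalSpace S] (s₀ : S) :
    Continuous (zipUnshift (Z := Z) s₀) := by
  refine Continuous.prodMk (continuous_pi fun n => ?_) (continuous_pi fun n => ?_)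
  · exact (continuous_apply (n + 1)).comp continuous_fst
  · rcases n with _ | n
    · simpa [zipUnshift] using continuous_const
    · simpa [zipUnshift, Function.comp_def] using (continuous_apply n).comp
        (continuous_snd : Continuous fun y : Zip Z S => y.2)

/-- the zip-shift map `σ_τ` is an open map on the full zip-shift space. -/
theorem zipShift_isOpenMap {Z S : Type*}
    [TopologicalSpace Z] [DiscreteTopology Z] [TopologicalSpace S] [DiscreteTopology S]
    (τ : S → Z) (hτ : Function.Surjective τ) :
    IsOpenMap (zipShift τ) := by
  intro U hU
  have himg : zipShift τ '' U =
      ⋃ s₀ : S, {y : Zip Z S | y.1 0 = τ s₀} ∩ zipUnshift s₀ ⁻¹' U := by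
    ext y
    simp only [Set.mem_image, Set.mem_iUnion, Set.mem_inter_iff, Set.mem_setOf_eq,
      Set.mem_preimage]
    constructor
    · rintro ⟨x, hx, rfl⟩
      refine ⟨x.2 0, by simp [zipShift], ?_⟩
      rw [zipUnshift_zipShift]; exact hx
    · rintro ⟨s₀, h1, h2⟩
      exact ⟨zipUnshift s₀ y, h2, zipShift_zipUnshift τ s₀ y h1⟩
  rw [himg]
  refine isOpen_iUnion fun s₀ => IsOpen.inter ?_ ((continuous_zipUnshift s₀).isOpen_preimage U hU)
  have hc : Continuous fun y : Zip Z S => y.1 0 := (continuous_apply 0).comp continuous_fst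
  exact hc.isOpen_preimage {τ s₀} (isOpen_discrete _)
end

section
/- Any continuous self-map R of the full zip-shift space Σ_{Z,S} satisfying R ∘ σ_τ = σ_τ ∘ R admits a local rule: there exists k ∈ ℕ such that for all x, y ∈ Σ_{Z,S} and all i ∈ ℤ, if x_{[i-k,i+k]} = y_{[i-k,i+k]} then [R(x)]_i = [R(y)]_i. -/
section ZipAux

variable {Z S : Type*}

lemma zcoord_neg (x : Zip Z S) {j : ℤ} (h : j < 0) :
    zcoord x j = Sum.inl (x.1 (-1 - j).toNat) := if_pos h

lemma zcoord_nonneg (x : Zip Z S) {j : ℤ} (h : 0 ≤ j) :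
    zcoord x j = Sum.inr (x.2 j.toNat) := if_neg (not_lt.2 h)

/-- One step of the shift: the coordinate at `m` of `σ_τ u` is determined by the
coordinate of `u` at `m+1`. -/
lemma zip_step_det (τ : S → Z) (u v : Zip Z S) (m : ℤ)
    (h : zcoord u (m + 1) = zcoord v (m + 1)) :
    zcoord (zipShift τ u) m = zcoord (zipShift τ v) m := by
  rcases lt_trichotomy m (-1) with hm | hm | hm
  · have h1 : m < 0 := by omega
    have h2 : m + 1 < 0 := by omega
    rw [zcoord_neg _ h2, zcoord_neg _ h2] at h
    have h3 := Sum.inl.inj h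
    rw [zcoord_neg _ h1, zcoord_neg _ h1]
    simp only [zipShift]
    have hne : ¬ ((-1 - m).toNat = 0) := by omega
    rw [if_neg hne, if_neg hne]
    have h4 : (-1 - m).toNat - 1 = (-1 - (m + 1)).toNat := by omega
    rw [h4, h3]
  · subst hm
    norm_num at h
    rw [zcoord_nonneg _ le_rfl, zcoord_nonneg _ le_rfl] at h
    have h3 := Sum.inr.inj h
    simp only [Int.toNat_zero] at h3
    rw [zcoord_neg _ (by norm_num : (-1 : ℤ) < 0), zcoord_neg _ (by norm_num : (-1 : ℤ) < 0)]
    simp only [zipShift]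
    norm_num [h3]
  · have h1 : 0 ≤ m := by omega
    have h2 : (0 : ℤ) ≤ m + 1 := by omega
    rw [zcoord_nonneg _ h2, zcoord_nonneg _ h2] at h
    have h3 := Sum.inr.inj h
    rw [zcoord_nonneg _ h1, zcoord_nonneg _ h1]
    simp only [zipShift]
    have h4 : m.toNat + 1 = (m + 1).toNat := by omega
    rw [h4, h3]

/-- Iterated version: the coordinate at `j` of `σ_τ^[n] u` is determined by the
coordinate of `u` at `j + n`. -/
lemma zip_iter_det (τ : S → Z) (n : ℕ) (u v : Zip Z S) (j : ℤ)
    (h : zcoord u (j + n) = zcoord v (j + n)) :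
    zcoord ((zipShift τ)^[n] u) j = zcoord ((zipShift τ)^[n] v) j := by
  induction n generalizing u v with
  | zero => simpa using h
  | succ n ih =>
    rw [Function.iterate_succ_apply, Function.iterate_succ_apply]
    apply ih
    apply zip_step_det
    have : j + (n : ℤ) + 1 = j + ((n : ℕ) + 1 : ℕ) := by push_cast; ring
    rw [this]
    exact h

/-- For a nonnegative coordinate `j`, the coordinate of `σ_τ^[n] x` at `j` equals
the coordinate of `x` at `j + n` exactly. -/
lemma zip_iter_coord_nonneg (τ : S → Z) (n : ℕ) (x : Zip Z S) (j : ℤ) (hj : 0 ≤ j) :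
    zcoord ((zipShift τ)^[n] x) j = zcoord x (j + n) := by
  induction n generalizing x with
  | zero => simp
  | succ n ih =>
    rw [Function.iterate_succ_apply, ih (zipShift τ x)]
    have hstep : zcoord (zipShift τ x) (j + n) = zcoord x (j + n + 1) := by
      have h1 : (0 : ℤ) ≤ j + n := by positivity
      rw [zcoord_nonneg _ h1, zcoord_nonneg _ (by omega : (0:ℤ) ≤ j + n + 1)]
      simp only [zipShift]
      have : (j + n).toNat + 1 = (j + n + 1).toNat := by omega
      rw [this]
    rw [hstep]
    congr 1
    push_cast
    ring

/-- An explicit preimage of `x` under `σ_τ^[n]`, built from a section `s` of `τ`. -/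
def zipPull (s : Z → S) (n : ℕ) (x : Zip Z S) : Zip Z S :=
  (fun m => x.1 (m + n),
   fun m => if m < n then s (x.1 (n - 1 - m)) else x.2 (m - n))

lemma zipShift_zipPull (τ : S → Z) (s : Z → S) (hs : ∀ z, τ (s z) = z)
    (n : ℕ) (x : Zip Z S) :
    zipShift τ (zipPull s (n + 1) x) = zipPull s n x := by
  unfold zipShift zipPull
  refine Prod.ext ?_ ?_
  · funext m
    by_cases hm : m = 0
    · subst hm
      simp [hs]
    · have e : m - 1 + (n + 1) = m + n := by omega
      simp only [if_neg hm, e]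
  · funext m
    by_cases hm : m < n
    · have e : n + 1 - 1 - (m + 1) = n - 1 - m := by omega
      simp only [if_pos (by omega : m + 1 < n + 1), if_pos hm, e]
    · have e : m + 1 - (n + 1) = m - n := by omega
      simp only [if_neg (by omega : ¬ (m + 1 < n + 1)), if_neg hm, e]

lemma zip_iter_zipPull (τ : S → Z) (s : Z → S) (hs : ∀ z, τ (s z) = z)
    (n : ℕ) (x : Zip Z S) :
    (zipShift τ)^[n] (zipPull s n x) = x := by
  induction n with
  | zero =>
    refine Prod.ext ?_ ?_
    · funext m; simp [zipPull]
    · funext m; simp [zipPull]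
  | succ n ih =>
    rw [Function.iterate_succ_apply, zipShift_zipPull τ s hs, ih]

/-- The coordinate at `j` of `zipPull s n x` is determined by the coordinate of `x`
at `j - n`. -/
lemma zipPull_det (s : Z → S) (n : ℕ) (x y : Zip Z S) (j : ℤ)
    (h : zcoord x (j - n) = zcoord y (j - n)) :
    zcoord (zipPull s n x) j = zcoord (zipPull s n y) j := by
  rcases lt_trichotomy j 0 with hj | hj | hj
  · have h2 : j - n < 0 := by omega
    rw [zcoord_neg _ h2, zcoord_neg _ h2] at h
    have h3 := Sum.inl.inj h
    rw [zcoord_neg _ hj, zcoord_neg _ hj]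
    simp only [zipPull]
    have h4 : (-1 - j).toNat + n = (-1 - (j - n)).toNat := by omega
    rw [h4, h3]
  · subst hj
    by_cases hn : (0 : ℤ) < n
    · have h2 : (0 : ℤ) - n < 0 := by omega
      rw [zcoord_neg _ h2, zcoord_neg _ h2] at h
      have h3 := Sum.inl.inj h
      rw [zcoord_nonneg _ le_rfl, zcoord_nonneg _ le_rfl]
      simp only [zipPull, Int.toNat_zero]
      rw [if_pos (by omega : 0 < n), if_pos (by omega : 0 < n)]
      have h4 : n - 1 - 0 = (-1 - ((0:ℤ) - n)).toNat := by omega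
      rw [h4, h3]
    · have hn0 : n = 0 := by omega
      subst hn0
      simpa [zipPull, zcoord] using h
  · by_cases hjn : j < n
    · have h2 : j - n < 0 := by omega
      rw [zcoord_neg _ h2, zcoord_neg _ h2] at h
      have h3 := Sum.inl.inj h
      rw [zcoord_nonneg _ (le_of_lt hj), zcoord_nonneg _ (le_of_lt hj)]
      simp only [zipPull]
      rw [if_pos (by omega : j.toNat < n), if_pos (by omega : j.toNat < n)]
      have h4 : n - 1 - j.toNat = (-1 - (j - n)).toNat := by omega
      rw [h4, h3]
    · have h2 : (0 : ℤ) ≤ j - n := by omega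
      rw [zcoord_nonneg _ h2, zcoord_nonneg _ h2] at h
      have h3 := Sum.inr.inj h
      rw [zcoord_nonneg _ (le_of_lt hj), zcoord_nonneg _ (le_of_lt hj)]
      simp only [zipPull]
      rw [if_neg (by omega : ¬ (j.toNat < n)), if_neg (by omega : ¬ (j.toNat < n))]
      have h4 : j.toNat - n = (j - n).toNat := by omega
      rw [h4, h3]

/-- Cylinder sets are a neighbourhood basis in a countable product of discrete spaces. -/
lemma mem_nhds_cyl {α : Type*} [TopologicalSpace α] [DiscreteTopology α]
    {u : ℕ → α} {A : Set (ℕ → α)} (hA : A ∈ nhds u) :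
    ∃ k : ℕ, ∀ v : ℕ → α, (∀ m ≤ k, v m = u m) → v ∈ A := by
  rw [nhds_pi, Filter.mem_pi] at hA
  obtain ⟨I, hIfin, V, hV, hsub⟩ := hA
  obtain ⟨k, hk⟩ := hIfin.bddAbove
  refine ⟨k, fun v hv => hsub ?_⟩
  intro i hi
  rw [hv i (hk hi)]
  exact mem_of_mem_nhds (hV i)

/-- Cylinder sets are a neighbourhood basis in the zip space. -/
lemma mem_nhds_zip {Z S : Type*} [TopologicalSpace Z] [DiscreteTopology Z]
    [TopologicalSpace S] [DiscreteTopology S]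
    {x : Zip Z S} {U : Set (Zip Z S)} (hU : U ∈ nhds x) :
    ∃ k : ℕ, ∀ y : Zip Z S,
      (∀ m ≤ k, y.1 m = x.1 m) → (∀ m ≤ k, y.2 m = x.2 m) → y ∈ U := by
  rw [nhds_prod_eq] at hU
  obtain ⟨A, hA, B, hB, hsub⟩ := Filter.mem_prod_iff.mp hU
  obtain ⟨k₁, hk₁⟩ := mem_nhds_cyl hA
  obtain ⟨k₂, hk₂⟩ := mem_nhds_cyl hB
  refine ⟨max k₁ k₂, fun y h1 h2 => hsub ⟨?_, ?_⟩⟩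
  · exact hk₁ y.1 fun m hm => h1 m (le_trans hm (le_max_left _ _))
  · exact hk₂ y.2 fun m hm => h2 m (le_trans hm (le_max_right _ _))

end ZipAux

/-- a continuous self-map `R` of the full zip-shift space satisfying
`R ∘ σ_τ = σ_τ ∘ R` admits a local rule: there is `k ∈ ℕ` such that whenever two
points agree on the window `[i-k, i+k]`, their images under `R` agree at
coordinate `i`. -/
theorem zip_CHL_local_rule {Z S : Type*} [Finite Z] [Finite S]
    [TopologicalSpace Z] [DiscreteTopology Z] [TopologicalSpace S] [DiscreteTopology S]
    (τ : S → Z) (hτ : Function.Surjective τ)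
    (R : Zip Z S → Zip Z S) (hR : Continuous R)
    (hcomm : ∀ x : Zip Z S, R (zipShift τ x) = zipShift τ (R x)) :
    ∃ k : ℕ, ∀ (x y : Zip Z S) (i : ℤ),
      (∀ j : ℤ, i - k ≤ j → j ≤ i + k → zcoord x j = zcoord y j) →
      zcoord (R x) i = zcoord (R y) i := by
  classical
  -- a section of τ
  obtain ⟨s, hs⟩ : ∃ s : Z → S, ∀ z, τ (s z) = z :=
    ⟨fun z => (hτ z).choose, fun z => (hτ z).choose_spec⟩
  -- commutation with iterates
  have hcomm_iter : ∀ (n : ℕ) (x : Zip Z S),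
      R ((zipShift τ)^[n] x) = (zipShift τ)^[n] (R x) := by
    intro n
    induction n with
    | zero => intro x; simp
    | succ n ih =>
      intro x
      rw [Function.iterate_succ_apply, ih (zipShift τ x), hcomm,
        ← Function.iterate_succ_apply]
  -- the "local map at coordinate 0"
  set g : Zip Z S → S := fun x => (R x).2 0 with hg
  have hgcont : Continuous g := (continuous_apply 0).comp (continuous_snd.comp hR)
  -- base case: a uniform window for coordinate 0, by compactness
  have base : ∃ k : ℕ, ∀ x y : Zip Z S,
      (∀ j : ℤ, -(k : ℤ) ≤ j → j ≤ (k : ℤ) → zcoord x j = zcoord y j) →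
      g x = g y := by
    -- for each x, a window size
    have hx : ∀ x : Zip Z S, ∃ k : ℕ, ∀ y : Zip Z S,
        (∀ m ≤ k, y.1 m = x.1 m) → (∀ m ≤ k, y.2 m = x.2 m) → g y = g x := by
      intro x
      have hopen : g ⁻¹' {g x} ∈ nhds x :=
        (hgcont.isOpen_preimage _ (isOpen_discrete _)).mem_nhds rfl
      obtain ⟨k, hk⟩ := mem_nhds_zip hopen
      exact ⟨k, fun y h1 h2 => hk y h1 h2⟩
    choose kf hkf using hx
    -- cover by open cylinders
    set B : Zip Z S → Set (Zip Z S) := fun x =>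
      {y | (∀ m ≤ kf x, y.1 m = x.1 m) ∧ (∀ m ≤ kf x, y.2 m = x.2 m)} with hB
    have hBopen : ∀ x, IsOpen (B x) := by
      intro x
      have h1 : B x = (⋂ m ∈ Finset.range (kf x + 1),
          ((fun y : Zip Z S => y.1 m) ⁻¹' {x.1 m} ∩
           (fun y : Zip Z S => y.2 m) ⁻¹' {x.2 m})) := by
        ext y
        simp only [hB, Set.mem_setOf_eq, Set.mem_iInter, Finset.mem_range,
          Set.mem_inter_iff, Set.mem_preimage, Set.mem_singleton_iff]
        constructor
        · rintro ⟨h1, h2⟩ m hm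
          exact ⟨h1 m (by omega), h2 m (by omega)⟩
        · intro h
          exact ⟨fun m hm => (h m (by omega)).1, fun m hm => (h m (by omega)).2⟩
      rw [h1]
      refine isOpen_biInter_finset fun m _ => IsOpen.inter ?_ ?_
      · exact (isOpen_discrete _).preimage ((continuous_apply m).comp continuous_fst)
      · exact (isOpen_discrete _).preimage ((continuous_apply m).comp continuous_snd)
    have hcover : (Set.univ : Set (Zip Z S)) ⊆ ⋃ x, B x := by
      intro x _
      exact Set.mem_iUnion.mpr ⟨x, ⟨fun m _ => rfl, fun m _ => rfl⟩⟩
    obtain ⟨t, ht⟩ := isCompact_univ.elim_finite_subcover B hBopen hcover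
    refine ⟨(t.sup kf) + 1, fun x y hxy => ?_⟩
    -- component agreement up to t.sup kf
    have hxy1 : ∀ m ≤ t.sup kf, x.1 m = y.1 m := by
      intro m hm
      have hj := hxy (-1 - m) (by push_cast; omega) (by push_cast; omega)
      rw [zcoord_neg _ (by omega), zcoord_neg _ (by omega)] at hj
      have := Sum.inl.inj hj
      simpa using this
    have hxy2 : ∀ m ≤ t.sup kf, x.2 m = y.2 m := by
      intro m hm
      have hj := hxy (m : ℤ) (by push_cast; omega) (by push_cast; omega)
      rw [zcoord_nonneg _ (by positivity), zcoord_nonneg _ (by positivity)] at hj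
      have := Sum.inr.inj hj
      simpa using this
    obtain ⟨c, hct, hxc⟩ : ∃ c ∈ t, x ∈ B c := by
      have := ht (Set.mem_univ x)
      simpa using this
    have hkc : kf c ≤ t.sup kf := Finset.le_sup hct
    have hyc : y ∈ B c := by
      refine ⟨fun m hm => ?_, fun m hm => ?_⟩
      · rw [← hxy1 m (le_trans hm hkc)]; exact hxc.1 m hm
      · rw [← hxy2 m (le_trans hm hkc)]; exact hxc.2 m hm
    exact (hkf c x hxc.1 hxc.2).trans (hkf c y hyc.1 hyc.2).symm
  obtain ⟨k, hk⟩ := base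
  refine ⟨k, fun x y i hxy => ?_⟩
  rcases le_or_gt 0 i with hi | hi
  · -- nonnegative coordinate: push forward by the shift
    set n : ℕ := i.toNat with hn
    have hni : (n : ℤ) = i := Int.toNat_of_nonneg hi
    have h1 : ∀ j : ℤ, -(k : ℤ) ≤ j → j ≤ (k : ℤ) →
        zcoord ((zipShift τ)^[n] x) j = zcoord ((zipShift τ)^[n] y) j := by
      intro j hj1 hj2
      apply zip_iter_det
      apply hxy <;> omega
    have h2 := hk _ _ h1
    have h3 : ∀ w : Zip Z S, zcoord (R w) i = Sum.inr (g ((zipShift τ)^[n] w)) := by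
      intro w
      have e1 := zip_iter_coord_nonneg τ n (R w) 0 le_rfl
      rw [zero_add, hni] at e1
      rw [← e1, ← hcomm_iter n w, zcoord_nonneg _ le_rfl]
      rfl
    rw [h3 x, h3 y, h2]
  · -- negative coordinate: pull back by the shift using the section of τ
    set n : ℕ := (-i).toNat with hn
    have hni : (n : ℤ) = -i := Int.toNat_of_nonneg (by omega)
    set w := zipPull s n x with hw
    set w' := zipPull s n y with hw'
    have h1 : ∀ j : ℤ, -(k : ℤ) ≤ j → j ≤ (k : ℤ) → zcoord w j = zcoord w' j := by
      intro j hj1 hj2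
      apply zipPull_det
      apply hxy <;> omega
    have h2 := hk _ _ h1
    have hx' : R x = (zipShift τ)^[n] (R w) := by
      rw [← hcomm_iter, hw, zip_iter_zipPull τ s hs]
    have hy' : R y = (zipShift τ)^[n] (R w') := by
      rw [← hcomm_iter, hw', zip_iter_zipPull τ s hs]
    rw [hx', hy']
    apply zip_iter_det
    have h0 : i + (n : ℤ) = 0 := by omega
    rw [h0, zcoord_nonneg _ le_rfl, zcoord_nonneg _ le_rfl]
    exact congrArg Sum.inr h2
end
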